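/- Let ρ be a quantum state on ℂ^{d_A} ⊗ ℂ^{d_B} with marginals ρ_A = tr_B ρ and ρ_B = tr_A ρ, and let M_A = (M_j)_{j∈J} be a POVM on ℂ^{d_A}. Set p_j = tr((M_j ⊗ I_B)ρ), and for each j with p_j > 0 let ρ_j = tr_A((M_j ⊗ I_B)ρ)/p_j be the conditional state on ℂ^{d_B}. Then S_{M_A}(A|B)_ρ = S_{M_A}(ρ_A) − S(ρ_B) + ∑_{j: p_j>0} p_j S(ρ_j). -/

import Mathlib

open scoped BigOperators ComplexOrder Classical

noncomputable section

/-- Shannon entropy of a finitely supported distribution, with `0 log 0 = 0`. -/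
def shannonEntropy {ι : Type*} [Fintype ι] (p : ι → ℝ) : ℝ :=
  -∑ i, p i * Real.log (p i)

/-- A quantum state: positive semidefinite with unit trace. -/
def IsState {n : Type*} [Fintype n] (ρ : Matrix n n ℂ) : Prop :=
  ρ.PosSemidef ∧ ρ.trace = 1

/-- A POVM: positive semidefinite elements summing to the identity. -/
def IsPOVM {ι n : Type*} [Fintype ι] [Fintype n] [DecidableEq n]
    (M : ι → Matrix n n ℂ) : Prop :=
  (∀ i, (M i).PosSemidef) ∧ ∑ i, M i = 1

/-- Observational entropy `S_M(ρ) = -∑ p_i log (p_i / V_i)`. -/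
def obsEntropy {ι n : Type*} [Fintype ι] [Fintype n]
    (M : ι → Matrix n n ℂ) (ρ : Matrix n n ℂ) : ℝ :=
  -∑ i, ((M i * ρ).trace.re * Real.log ((M i * ρ).trace.re / (M i).trace.re))

/-- The function `g(x) = -x log x + (1+x) log(1+x)`. -/
def gFun (x : ℝ) : ℝ := -(x * Real.log x) + (1 + x) * Real.log (1 + x)

/-- Trace norm of a square complex matrix. -/
def traceNorm {n : Type*} [Fintype n] [DecidableEq n] (X : Matrix n n ℂ) : ℝ :=
  (((Matrix.posSemidef_conjTranspose_mul_self X).1.eigenvectorUnitary : Matrix n n ℂ) *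
    Matrix.diagonal (((↑) : ℝ → ℂ) ∘ (Real.sqrt ·) ∘ (Matrix.posSemidef_conjTranspose_mul_self X).1.eigenvalues) *
    (star ((Matrix.posSemidef_conjTranspose_mul_self X).1.eigenvectorUnitary : Matrix n n ℂ))).trace.re

/-- Matrix logarithm of a Hermitian matrix via the spectral decomposition,
with the convention `log 0 = 0` on the kernel; junk value `0` on non-Hermitian input. -/
def matLog {n : Type*} [Fintype n] [DecidableEq n] (A : Matrix n n ℂ) : Matrix n n ℂ :=
  if hA : A.IsHermitian then
    (hA.eigenvectorUnitary : Matrix n n ℂ) *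
      Matrix.diagonal (fun i => (Real.log (hA.eigenvalues i) : ℂ)) *
      (star (hA.eigenvectorUnitary : Matrix n n ℂ))
  else 0

/-- Von Neumann entropy `S(ρ) = -tr(ρ log ρ)`. -/
def vnEntropy {n : Type*} [Fintype n] [DecidableEq n] (ρ : Matrix n n ℂ) : ℝ :=
  -((ρ * matLog ρ).trace.re)

/-- Quantum relative entropy, as an extended real number: `tr(μ (log μ - log ν))` when
`supp μ ⊆ supp ν` (both Hermitian), and `+∞` otherwise. -/
def qRelEntropy {n : Type*} [Fintype n] [DecidableEq n] (μ ν : Matrix n n ℂ) : EReal :=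
  if μ.IsHermitian ∧ ν.IsHermitian ∧
      LinearMap.range (Matrix.toLin' μ) ≤ LinearMap.range (Matrix.toLin' ν) then
    (((μ * (matLog μ - matLog ν)).trace.re : ℝ) : EReal)
  else ⊤

/-- Real-valued quantum relative entropy `tr(μ (log μ - log ν))` (meaningful when
`supp μ ⊆ supp ν`). -/
def qRelEntropyR {n : Type*} [Fintype n] [DecidableEq n] (μ ν : Matrix n n ℂ) : ℝ :=
  (μ * (matLog μ - matLog ν)).trace.re


/-- Partial trace over the first (A) tensor factor. -/
def ptraceA {dA dB : ℕ} (X : Matrix (Fin dA × Fin dB) (Fin dA × Fin dB) ℂ) :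
    Matrix (Fin dB) (Fin dB) ℂ :=
  Matrix.of fun b b' => ∑ a, X (a, b) (a, b')

/-- Partial trace over the second (B) tensor factor. -/
def ptraceB {dA dB : ℕ} (X : Matrix (Fin dA × Fin dB) (Fin dA × Fin dB) ℂ) :
    Matrix (Fin dA) (Fin dA) ℂ :=
  Matrix.of fun a a' => ∑ b, X (a, b) (a', b)

/-- The channel `Φ_{M_A} ⊗ id_B`, measuring the A factor with the POVM `M` and keeping B:
`X ↦ ∑_j |j⟩⟨j| ⊗ tr_A((M_j ⊗ I_B) X)`. -/
def measureA {dA dB : ℕ} {J : Type*} [Fintype J] [DecidableEq J]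
    (M : J → Matrix (Fin dA) (Fin dA) ℂ)
    (X : Matrix (Fin dA × Fin dB) (Fin dA × Fin dB) ℂ) :
    Matrix (J × Fin dB) (J × Fin dB) ℂ :=
  Matrix.of fun p q =>
    if p.1 = q.1 then ∑ a, ∑ a', (M p.1) a a' * X (a', p.2) (a, q.2) else 0

/-- Conditional observational entropy
`S_{M_A}(A|B)_ρ = -D((Φ_{M_A} ⊗ id_B)(ρ) ‖ (Φ_{M_A} ⊗ id_B)(I_A ⊗ ρ_B))`. -/
def condObsEntropy {dA dB : ℕ} {J : Type*} [Fintype J] [DecidableEq J]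
    (M : J → Matrix (Fin dA) (Fin dA) ℂ)
    (ρ : Matrix (Fin dA × Fin dB) (Fin dA × Fin dB) ℂ) : EReal :=
  - qRelEntropy (measureA M ρ)
      (measureA M (Matrix.kroneckerMap (· * ·) (1 : Matrix (Fin dA) (Fin dA) ℂ) (ptraceA ρ)))


/-!
Both arguments of the relative entropy are block diagonal over the outcomes `j`, with blocks
`A_j = tr_A((M_j ⊗ I) ρ)` and `V_j ρ_B`, where `V_j = tr M_j` and `∑_j A_j = ρ_B`. The matrix
logarithm acts blockwise, so the relative entropy is `∑_j tr A_j (log A_j - log (V_j ρ_B))`.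
Since `0 ≤ A_j ≤ ρ_B`, the kernel of `ρ_B` is contained in that of `A_j`; this gives the support
condition and `tr A_j log (V_j ρ_B) = p_j log V_j + tr A_j log ρ_B`, while for `p_j > 0` the same
scaling rule gives `tr A_j log A_j = p_j log p_j - p_j S(ρ_j)`. Summing over `j` yields the formula.
-/

open Matrix
open scoped MatrixOrder Kronecker

lemma Matrix.PosSemidef.ofReal_trace_re {n : Type*} [Fintype n] {A : Matrix n n ℂ}
    (hA : A.PosSemidef) : (A.trace.re : ℂ) = A.trace :=
  (Complex.eq_re_of_ofReal_le (Complex.ofReal_zero ▸ hA.trace_nonneg)).symm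

lemma Matrix.PosSemidef.mulVec_eq_zero_of_le {n : Type*} [Fintype n] {A B : Matrix n n ℂ}
    (hA : A.PosSemidef) (hAB : (B - A).PosSemidef) {v : n → ℂ} (hv : B *ᵥ v = 0) :
    A *ᵥ v = 0 := by
  rw [← hA.dotProduct_mulVec_zero_iff]
  have hBA := hAB.dotProduct_mulVec_nonneg v
  rw [sub_mulVec, hv, zero_sub, dotProduct_neg, neg_nonneg] at hBA
  exact le_antisymm hBA (hA.dotProduct_mulVec_nonneg v)

section SupportProjection

variable {n : Type*} [Fintype n] [DecidableEq n]

lemma matLog_eq_cfc {A : Matrix n n ℂ} (hA : A.IsHermitian) : matLog A = cfc Real.log A := by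
  rw [matLog, dif_pos hA, hA.cfc_eq, IsHermitian.cfc, Unitary.conjStarAlgAut_apply]
  rfl

/-- `x * x⁻¹` is the indicator of `x ≠ 0`, since `0⁻¹ = 0`. -/
def supportProj (B : Matrix n n ℂ) : Matrix n n ℂ := cfc (fun x : ℝ => x * x⁻¹) B

lemma isHermitian_supportProj (B : Matrix n n ℂ) : (supportProj B).IsHermitian :=
  IsSelfAdjoint.cfc

lemma range_supportProj_le {B : Matrix n n ℂ} (hB : B.IsHermitian) :
    LinearMap.range (toLin' (supportProj B)) ≤ LinearMap.range (toLin' B) := by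
  rw [supportProj, cfc_mul _ (fun x : ℝ => x⁻¹) B (finite_real_spectrum.continuousOn _)
    (finite_real_spectrum.continuousOn _), cfc_id' ℝ B hB.isSelfAdjoint, toLin'_mul]
  exact LinearMap.range_comp_le_range _ _

lemma mul_supportProj_self {B : Matrix n n ℂ} (hB : B.IsHermitian) : B * supportProj B = B :=
  calc B * supportProj B = cfc (fun x : ℝ => x * (x * x⁻¹)) B := by
        rw [cfc_mul _ _ B (finite_real_spectrum.continuousOn _)
          (finite_real_spectrum.continuousOn _), cfc_id' ℝ B hB.isSelfAdjoint, supportProj]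
    _ = cfc (fun x : ℝ => x) B := cfc_congr fun x _ => by
        rcases eq_or_ne x 0 with rfl | hx
        · simp
        · field_simp
    _ = B := cfc_id' ℝ B hB.isSelfAdjoint

lemma supportProj_smul {B : Matrix n n ℂ} (hB : B.IsHermitian) {c : ℝ} (hc : c ≠ 0) :
    supportProj (c • B) = supportProj B := by
  rw [supportProj, ← cfc_comp_smul c (fun x : ℝ => x * x⁻¹) B
    ((finite_real_spectrum.image _).continuousOn _) hB.isSelfAdjoint, supportProj]
  refine cfc_congr fun x _ => ?_
  rcases eq_or_ne x 0 with rfl | hx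
  · simp
  · field_simp

lemma matLog_smul {B : Matrix n n ℂ} (hB : B.IsHermitian) {c : ℝ} (hc : c ≠ 0) :
    matLog (c • B) = Real.log c • supportProj B + matLog B := by
  rw [matLog_eq_cfc (hB.smul (.all c)), matLog_eq_cfc hB, supportProj,
    ← cfc_comp_smul c Real.log B ((finite_real_spectrum.image _).continuousOn _)
      hB.isSelfAdjoint,
    ← cfc_const_mul _ _ B (finite_real_spectrum.continuousOn _),
    ← cfc_add B _ _ (finite_real_spectrum.continuousOn _) (finite_real_spectrum.continuousOn _)]
  refine cfc_congr fun x _ => ?_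
  rcases eq_or_ne x 0 with rfl | hx
  · simp
  · simp [hx, smul_eq_mul, Real.log_mul hc hx]

lemma trace_mul_matLog_smul {A B : Matrix n n ℂ} (hB : B.IsHermitian)
    (hAB : A * supportProj B = A) {c : ℝ} (hc : c ≠ 0) :
    (A * matLog (c • B)).trace.re = Real.log c * A.trace.re + (A * matLog B).trace.re := by
  rw [matLog_smul hB hc, Matrix.mul_add, Matrix.mul_smul, hAB, trace_add, trace_smul,
    Complex.add_re, Complex.smul_re, smul_eq_mul]

lemma mul_supportProj_of_le {A B : Matrix n n ℂ} (hA : A.PosSemidef)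
    (hAB : (B - A).PosSemidef) : A * supportProj B = A := by
  have hB : B.IsHermitian := by simpa using hAB.1.add hA.1
  have hQ : A * (1 - supportProj B) = 0 := toLin'.injective <| LinearMap.ext fun v => by
    simp only [toLin'_apply, ← mulVec_mulVec, map_zero, LinearMap.zero_apply]
    refine hA.mulVec_eq_zero_of_le hAB ?_
    rw [mulVec_mulVec, Matrix.mul_sub, Matrix.mul_one, mul_supportProj_self hB, sub_self,
      zero_mulVec]
  rwa [Matrix.mul_sub, Matrix.mul_one, sub_eq_zero, eq_comm] at hQ

lemma mul_supportProj_smul_of_le {A B : Matrix n n ℂ} (hA : A.PosSemidef)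
    (hAB : (B - A).PosSemidef) {V : ℝ} (hV : A ≠ 0 → V ≠ 0) : A * supportProj (V • B) = A := by
  rcases eq_or_ne A 0 with rfl | hA0
  · exact Matrix.zero_mul _
  · rw [supportProj_smul (by simpa using hAB.1.add hA.1) (hV hA0)]
    exact mul_supportProj_of_le hA hAB

lemma range_le_range_of_mul_supportProj {μ ν : Matrix n n ℂ} (hμ : μ.IsHermitian)
    (hν : ν.IsHermitian) (h : μ * supportProj ν = μ) :
    LinearMap.range (toLin' μ) ≤ LinearMap.range (toLin' ν) := by
  have hP : supportProj ν * μ = μ := by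
    simpa [conjTranspose_mul, hμ.eq, (isHermitian_supportProj ν).eq]
      using congrArg conjTranspose h
  calc LinearMap.range (toLin' μ) = LinearMap.range (toLin' (supportProj ν) ∘ₗ toLin' μ) := by
        rw [← toLin'_mul, hP]
    _ ≤ LinearMap.range (toLin' (supportProj ν)) := LinearMap.range_comp_le_range _ _
    _ ≤ LinearMap.range (toLin' ν) := range_supportProj_le hν

lemma qRelEntropy_eq_qRelEntropyR {μ ν : Matrix n n ℂ} (hμ : μ.IsHermitian)
    (hν : ν.IsHermitian) (h : μ * supportProj ν = μ) : qRelEntropy μ ν = qRelEntropyR μ ν := by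
  rw [qRelEntropy, if_pos ⟨hμ, hν, range_le_range_of_mul_supportProj hμ hν h⟩, qRelEntropyR]

lemma qRelEntropyR_smul_of_le {A B σ : Matrix n n ℂ} {p V : ℝ} (hA : A.PosSemidef)
    (hAB : (B - A).PosSemidef) (hp : A.trace.re = p) (hV : A ≠ 0 → V ≠ 0)
    (hσ : 0 < p → σ = p⁻¹ • A) :
    qRelEntropyR A (V • B) = p * Real.log (p / V) - (if 0 < p then p * vnEntropy σ else 0)
      - (A * matLog B).trace.re := by
  subst hp
  rcases (Complex.nonneg_iff.1 hA.trace_nonneg).1.lt_or_eq with hp | hp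
  · have hV' : V ≠ 0 := hV fun h => by simp [h] at hp
    have hVB := trace_mul_matLog_smul (by simpa using hAB.1.add hA.1)
      (mul_supportProj_of_le hA hAB) hV'
    have hpA := trace_mul_matLog_smul hA.1 (mul_supportProj_self hA.1) (inv_ne_zero hp.ne')
    have hS : A.trace.re * vnEntropy (A.trace.re⁻¹ • A)
        = -(A * matLog (A.trace.re⁻¹ • A)).trace.re := by
      rw [vnEntropy, Matrix.smul_mul, trace_smul, Complex.smul_re, smul_eq_mul]
      field_simp
    rw [if_pos hp, hσ hp, qRelEntropyR, Matrix.mul_sub, trace_sub, Complex.sub_re, hVB, hS, hpA,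
      Real.log_div hp.ne' hV', Real.log_inv]
    ring
  · have hA0 : A = 0 := hA.trace_eq_zero_iff.1 (by rw [← hA.ofReal_trace_re, ← hp]; simp)
    simp [hA0, qRelEntropyR]

end SupportProjection

section BlockDiagonal

variable {J n α : Type*} [Fintype J] [DecidableEq J] [Fintype n] [DecidableEq n]

/-- Mathlib's `blockDiagonal`, reindexed so that the block index comes first, as in `measureA`. -/
def blockDiagAlgHom (R : Type*) [CommSemiring R] [Semiring α] [Algebra R α] :
    (J → Matrix n n α) →ₐ[R] Matrix (J × n) (J × n) α :=
  (reindexAlgEquiv R α (Equiv.prodComm n J)).toAlgHom.comp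
    { blockDiagonalRingHom n J α with
      commutes' := fun r => by
        ext ⟨i, k⟩ ⟨i', k'⟩
        simp [blockDiagonal_apply, algebraMap_matrix_apply, ite_and]
        split_ifs <;> rfl }

variable {R : Type*} [CommSemiring R]

lemma blockDiagAlgHom_apply [Semiring α] [Algebra R α] (B : J → Matrix n n α) (p q : J × n) :
    blockDiagAlgHom R B p q = if p.1 = q.1 then B p.1 p.2 q.2 else 0 := by
  simp [blockDiagAlgHom, blockDiagonal_apply]

lemma trace_blockDiagAlgHom [Semiring α] [Algebra R α] (B : J → Matrix n n α) :
    (blockDiagAlgHom R B).trace = ∑ j, (B j).trace := by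
  simp [trace, Fintype.sum_prod_type, blockDiagAlgHom_apply]

lemma conjTranspose_blockDiagAlgHom [Semiring α] [StarRing α] [Algebra R α]
    (B : J → Matrix n n α) :
    (blockDiagAlgHom R B)ᴴ = blockDiagAlgHom R (fun j => (B j)ᴴ) := by
  ext p q
  simp only [conjTranspose_apply, blockDiagAlgHom_apply, eq_comm (a := q.1)]
  split_ifs with h <;> simp [h]

lemma isHermitian_blockDiagAlgHom [Semiring α] [StarRing α] [Algebra R α]
    {B : J → Matrix n n α} (hB : ∀ j, (B j).IsHermitian) : (blockDiagAlgHom R B).IsHermitian := by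
  rw [IsHermitian, conjTranspose_blockDiagAlgHom]
  exact congrArg _ (funext fun j => (hB j).eq)

open Polynomial in
lemma cfc_blockDiagAlgHom (f : ℝ → ℝ) {B : J → Matrix n n ℂ} (hB : ∀ j, (B j).IsHermitian) :
    cfc f (blockDiagAlgHom ℝ B) = blockDiagAlgHom ℝ (fun j => cfc f (B j)) := by
  set s : Set ℝ := spectrum ℝ (blockDiagAlgHom ℝ B) ∪ ⋃ j, spectrum ℝ (B j)
  have hs : s.Finite :=
    finite_real_spectrum.union (Set.finite_iUnion fun _ => finite_real_spectrum)
  -- On the finite set `s`, `f` is a polynomial, and algebra homomorphisms commute with those.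
  obtain ⟨q, hq⟩ : ∃ q : ℝ[X], Set.EqOn (fun x => q.eval x) f s :=
    ⟨Lagrange.interpolate hs.toFinset id f,
      fun x hx => Lagrange.eval_interpolate_at_node f (Set.injOn_id _) (hs.mem_toFinset.2 hx)⟩
  calc cfc f (blockDiagAlgHom ℝ B) = cfc (fun x => q.eval x) (blockDiagAlgHom ℝ B) :=
        cfc_congr (hq.symm.mono Set.subset_union_left)
    _ = blockDiagAlgHom ℝ (fun j => aeval (B j) q) := by
        rw [cfc_polynomial q _ (isHermitian_blockDiagAlgHom hB).isSelfAdjoint,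
          aeval_algHom_apply, aeval_pi_apply]
    _ = blockDiagAlgHom ℝ (fun j => cfc f (B j)) := by
        congr 1
        funext j
        rw [← cfc_polynomial q _ (hB j).isSelfAdjoint]
        exact cfc_congr (hq.mono
          ((Set.subset_iUnion (fun j => spectrum ℝ (B j)) j).trans Set.subset_union_right))

lemma supportProj_blockDiagAlgHom {B : J → Matrix n n ℂ} (hB : ∀ j, (B j).IsHermitian) :
    supportProj (blockDiagAlgHom ℝ B) = blockDiagAlgHom ℝ (fun j => supportProj (B j)) :=
  cfc_blockDiagAlgHom _ hB

lemma qRelEntropyR_blockDiagAlgHom {A B : J → Matrix n n ℂ} (hA : ∀ j, (A j).IsHermitian)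
    (hB : ∀ j, (B j).IsHermitian) :
    qRelEntropyR (blockDiagAlgHom ℝ A) (blockDiagAlgHom ℝ B) =
      ∑ j, qRelEntropyR (A j) (B j) := by
  simp only [qRelEntropyR, matLog_eq_cfc (isHermitian_blockDiagAlgHom hA),
    matLog_eq_cfc (isHermitian_blockDiagAlgHom hB), cfc_blockDiagAlgHom _ hA,
    cfc_blockDiagAlgHom _ hB, ← map_sub, ← map_mul, trace_blockDiagAlgHom, Complex.re_sum,
    Pi.mul_apply, Pi.sub_apply, matLog_eq_cfc (hA _), matLog_eq_cfc (hB _)]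

lemma qRelEntropy_blockDiagAlgHom {A B : J → Matrix n n ℂ} (hA : ∀ j, (A j).IsHermitian)
    (hB : ∀ j, (B j).IsHermitian) (hAB : ∀ j, A j * supportProj (B j) = A j) :
    qRelEntropy (blockDiagAlgHom ℝ A) (blockDiagAlgHom ℝ B) =
      ((∑ j, qRelEntropyR (A j) (B j) : ℝ) : EReal) := by
  rw [qRelEntropy_eq_qRelEntropyR (isHermitian_blockDiagAlgHom hA)
    (isHermitian_blockDiagAlgHom hB), qRelEntropyR_blockDiagAlgHom hA hB]
  rw [supportProj_blockDiagAlgHom hB, ← map_mul]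
  exact congrArg _ (funext hAB)

end BlockDiagonal

section PartialTrace

variable {dA dB : ℕ}

lemma ptraceA_eq_sum_submatrix (X : Matrix (Fin dA × Fin dB) (Fin dA × Fin dB) ℂ) :
    ptraceA X = ∑ a, X.submatrix (fun b => (a, b)) (fun b => (a, b)) := by
  ext b b'
  simp [ptraceA, Matrix.sum_apply]

lemma posSemidef_ptraceA {X : Matrix (Fin dA × Fin dB) (Fin dA × Fin dB) ℂ}
    (hX : X.PosSemidef) : (ptraceA X).PosSemidef := by
  rw [ptraceA_eq_sum_submatrix]
  exact posSemidef_sum _ fun a _ => hX.submatrix _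

lemma trace_ptraceA (X : Matrix (Fin dA × Fin dB) (Fin dA × Fin dB) ℂ) :
    (ptraceA X).trace = X.trace := by
  simp [ptraceA, trace, Fintype.sum_prod_type, Finset.sum_comm (γ := Fin dA)]

lemma ptraceA_sum {ι : Type*} (s : Finset ι)
    (X : ι → Matrix (Fin dA × Fin dB) (Fin dA × Fin dB) ℂ) :
    ptraceA (∑ i ∈ s, X i) = ∑ i ∈ s, ptraceA (X i) := by
  ext b b'
  simp [ptraceA, Matrix.sum_apply, Finset.sum_comm (γ := Fin dA)]

lemma ptraceA_kronecker (N : Matrix (Fin dA) (Fin dA) ℂ) (σ : Matrix (Fin dB) (Fin dB) ℂ) :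
    ptraceA (N ⊗ₖ σ) = N.trace • σ := by
  ext b b'
  simp [ptraceA, trace, Finset.sum_mul]

lemma ptraceA_kronecker_one_mul_apply (N : Matrix (Fin dA) (Fin dA) ℂ)
    (X : Matrix (Fin dA × Fin dB) (Fin dA × Fin dB) ℂ) (b b' : Fin dB) :
    ptraceA ((N ⊗ₖ 1) * X) b b' = ∑ a, ∑ a', N a a' * X (a', b) (a, b') := by
  simp [ptraceA, mul_apply, Fintype.sum_prod_type, one_apply]

lemma ptraceA_kronecker_one_mul_comm (N : Matrix (Fin dA) (Fin dA) ℂ)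
    (X : Matrix (Fin dA × Fin dB) (Fin dA × Fin dB) ℂ) :
    ptraceA ((N ⊗ₖ 1) * X) = ptraceA (X * (N ⊗ₖ 1)) := by
  ext b b'
  rw [ptraceA_kronecker_one_mul_apply, Finset.sum_comm]
  simp [ptraceA, mul_apply, Fintype.sum_prod_type, one_apply, mul_comm]

lemma trace_kronecker_one_mul (N : Matrix (Fin dA) (Fin dA) ℂ)
    (X : Matrix (Fin dA × Fin dB) (Fin dA × Fin dB) ℂ) :
    ((N ⊗ₖ 1) * X).trace = (N * ptraceB X).trace := by
  rw [← trace_ptraceA]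
  simp only [trace, diag, ptraceA_kronecker_one_mul_apply, ptraceB, mul_apply, of_apply,
    Finset.mul_sum]
  rw [Finset.sum_comm]
  exact Finset.sum_congr rfl fun _ _ => Finset.sum_comm

lemma posSemidef_ptraceA_kronecker_one_mul {N : Matrix (Fin dA) (Fin dA) ℂ}
    (hN : N.PosSemidef) {X : Matrix (Fin dA × Fin dB) (Fin dA × Fin dB) ℂ} (hX : X.PosSemidef) :
    (ptraceA ((N ⊗ₖ 1) * X)).PosSemidef := by
  obtain ⟨S, rfl⟩ := CStarAlgebra.nonneg_iff_eq_star_mul_self.mp hN.nonneg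
  have hS' : (S ⊗ₖ (1 : Matrix (Fin dB) (Fin dB) ℂ))ᴴ = Sᴴ ⊗ₖ 1 := by
    rw [conjTranspose_kronecker, conjTranspose_one]
  have hS : (star S * S) ⊗ₖ (1 : Matrix (Fin dB) (Fin dB) ℂ) = (Sᴴ ⊗ₖ 1) * (S ⊗ₖ 1) := by
    rw [← mul_kronecker_mul, Matrix.one_mul, star_eq_conjTranspose]
  rw [hS, Matrix.mul_assoc, ptraceA_kronecker_one_mul_comm, Matrix.mul_assoc, ← hS',
    ← Matrix.mul_assoc]
  exact posSemidef_ptraceA (hX.mul_mul_conjTranspose_same _)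

lemma ptraceA_kronecker_one_mul_eq_zero {N : Matrix (Fin dA) (Fin dA) ℂ} (hN : N.PosSemidef)
    (h : N.trace.re = 0) (X : Matrix (Fin dA × Fin dB) (Fin dA × Fin dB) ℂ) :
    ptraceA ((N ⊗ₖ 1) * X) = 0 := by
  rw [hN.trace_eq_zero_iff.1 (by rw [← hN.ofReal_trace_re, h, Complex.ofReal_zero]),
    zero_kronecker, Matrix.zero_mul]
  ext b b'
  simp [ptraceA]

end PartialTrace

section Measurement

variable {dA dB : ℕ} {J : Type*} [Fintype J] {M : J → Matrix (Fin dA) (Fin dA) ℂ}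

lemma sum_ptraceA_kronecker_one_mul (hM : ∑ j, M j = 1)
    (X : Matrix (Fin dA × Fin dB) (Fin dA × Fin dB) ℂ) :
    ∑ j, ptraceA ((M j ⊗ₖ 1) * X) = ptraceA X := by
  have hsum : ∑ j, M j ⊗ₖ (1 : Matrix (Fin dB) (Fin dB) ℂ) = 1 := by
    rw [← one_kronecker_one, ← hM]
    ext p q
    simp [Matrix.sum_apply, Finset.sum_mul]
  rw [← ptraceA_sum, ← Finset.sum_mul, hsum, Matrix.one_mul]

lemma posSemidef_ptraceA_sub_ptraceA_kronecker_one_mul [DecidableEq J] (hM : IsPOVM M)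
    {ρ : Matrix (Fin dA × Fin dB) (Fin dA × Fin dB) ℂ} (hρ : ρ.PosSemidef) (j : J) :
    (ptraceA ρ - ptraceA ((M j ⊗ₖ 1) * ρ)).PosSemidef := by
  rw [← sum_ptraceA_kronecker_one_mul hM.2, ← Finset.add_sum_erase _ _ (Finset.mem_univ j),
    add_sub_cancel_left]
  exact posSemidef_sum _ fun k _ => posSemidef_ptraceA_kronecker_one_mul (hM.1 k) hρ

lemma measureA_eq_blockDiagAlgHom [DecidableEq J] (M : J → Matrix (Fin dA) (Fin dA) ℂ)
    (X : Matrix (Fin dA × Fin dB) (Fin dA × Fin dB) ℂ) :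
    measureA M X = blockDiagAlgHom ℝ (fun j => ptraceA ((M j ⊗ₖ 1) * X)) := by
  ext p q
  rw [measureA, blockDiagAlgHom_apply, of_apply]
  split_ifs <;> simp [ptraceA_kronecker_one_mul_apply, *]

lemma measureA_one_kronecker [DecidableEq J] (hM : ∀ j, (M j).PosSemidef)
    (σ : Matrix (Fin dB) (Fin dB) ℂ) :
    measureA M (1 ⊗ₖ σ) = blockDiagAlgHom ℝ (fun j => (M j).trace.re • σ) := by
  rw [measureA_eq_blockDiagAlgHom]
  congr 1
  funext j
  rw [← mul_kronecker_mul, Matrix.mul_one, Matrix.one_mul, ptraceA_kronecker,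
    ← Complex.coe_smul, (hM j).ofReal_trace_re]

lemma obsEntropy_ptraceB (M : J → Matrix (Fin dA) (Fin dA) ℂ)
    (X : Matrix (Fin dA × Fin dB) (Fin dA × Fin dB) ℂ) :
    obsEntropy M (ptraceB X) = -∑ j, ((M j ⊗ₖ 1) * X).trace.re
      * Real.log (((M j ⊗ₖ 1) * X).trace.re / (M j).trace.re) := by
  simp only [obsEntropy, trace_kronecker_one_mul]

end Measurement

theorem condObsEntropy_formula {dA dB : ℕ} {J : Type*} [Fintype J] [DecidableEq J]
    (M : J → Matrix (Fin dA) (Fin dA) ℂ) (hM : IsPOVM M)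
    (ρ : Matrix (Fin dA × Fin dB) (Fin dA × Fin dB) ℂ) (hρ : IsState ρ)
    (p : J → ℝ)
    (hp : ∀ j, p j =
      ((Matrix.kroneckerMap (· * ·) (M j) (1 : Matrix (Fin dB) (Fin dB) ℂ)) * ρ).trace.re)
    (ρc : J → Matrix (Fin dB) (Fin dB) ℂ)
    (hρc : ∀ j, 0 < p j → ρc j = (p j)⁻¹ •
      ptraceA ((Matrix.kroneckerMap (· * ·) (M j) (1 : Matrix (Fin dB) (Fin dB) ℂ)) * ρ)) :
    condObsEntropy M ρ =
      ((obsEntropy M (ptraceB ρ) - vnEntropy (ptraceA ρ)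
        + ∑ j, (if 0 < p j then p j * vnEntropy (ρc j) else 0) : ℝ) : EReal) := by
  set A := fun j => ptraceA ((M j ⊗ₖ 1) * ρ)
  have hA j : (A j).PosSemidef := posSemidef_ptraceA_kronecker_one_mul (hM.1 j) hρ.1
  have hAB := posSemidef_ptraceA_sub_ptraceA_kronecker_one_mul hM hρ.1
  have hpA j : (A j).trace.re = p j := by rw [hp j, trace_ptraceA]
  have hV j : A j ≠ 0 → (M j).trace.re ≠ 0 :=
    mt fun h => ptraceA_kronecker_one_mul_eq_zero (hM.1 j) h ρ
  have hρB : (ptraceA ρ).IsHermitian := (posSemidef_ptraceA hρ.1).1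
  have hS : vnEntropy (ptraceA ρ) = -∑ j, (A j * matLog (ptraceA ρ)).trace.re := by
    rw [vnEntropy, ← Complex.re_sum, ← trace_sum, ← Finset.sum_mul,
      sum_ptraceA_kronecker_one_mul hM.2]
  rw [condObsEntropy, measureA_eq_blockDiagAlgHom, measureA_one_kronecker hM.1,
    qRelEntropy_blockDiagAlgHom (fun j => (hA j).1) (fun j => hρB.smul (.all _))
      (fun j => mul_supportProj_smul_of_le (hA j) (hAB j) (hV j)),
    Finset.sum_congr rfl fun j _ =>
      qRelEntropyR_smul_of_le (hA j) (hAB j) (hpA j) (hV j) (hρc j),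
    ← EReal.coe_neg, obsEntropy_ptraceB, hS]
  simp only [← hp, Finset.sum_sub_distrib]
  congr 1
  ring
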